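/- Let R_a > 0, R > 0, and let C ∈ (0,1] be a constant such that ‖v‖₂ ≤ C·‖∇v‖₂ for every C¹ function v on the closure of Ω vanishing on ∂Ω. Let (ψ₁,θ₁) and (ψ₂,θ₂) be pairs of C² functions on the closure of Ω, each vanishing on ∂Ω, each solving −Δψᵢ − R_a·∂ₓθᵢ = f₁ and J(ψᵢ,θᵢ) = Δθᵢ + f₂ pointwise on Ω (for the same continuous f₁, f₂), and satisfying |∂ₓψᵢ| ≤ R/√2, |∂_yψᵢ| ≤ R/√2, |∂ₓθᵢ| ≤ R/√2, |∂_yθᵢ| ≤ R/√2 on Ω for i = 1, 2. If 1 − C·R/√2 − C·R_a/2 > 0 and 1 − R_a/2 − 2√2·R·C > 0, then ψ₁ = ψ₂ and θ₁ = θ₂ on Ω. -/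

import Mathlib

open MeasureTheory Real Set Filter

noncomputable section

/-- The open unit square Ω = (0,1) × (0,1) in ℝ². -/
def Omg : Set (ℝ × ℝ) := Ioo (0:ℝ) 1 ×ˢ Ioo (0:ℝ) 1

/-- Partial derivative in the x-direction. -/
def px (f : ℝ × ℝ → ℝ) (p : ℝ × ℝ) : ℝ := fderiv ℝ f p (1, 0)

/-- Partial derivative in the y-direction. -/
def py (f : ℝ × ℝ → ℝ) (p : ℝ × ℝ) : ℝ := fderiv ℝ f p (0, 1)

/-- Laplacian. -/
def lap (f : ℝ × ℝ → ℝ) (p : ℝ × ℝ) : ℝ := px (px f) p + py (py f) p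

/-- Jacobian determinant J(ψ,θ) = ∂ₓψ·∂_yθ − ∂_yψ·∂ₓθ. -/
def Jac (ψ θ : ℝ × ℝ → ℝ) (p : ℝ × ℝ) : ℝ := px ψ p * py θ p - py ψ p * px θ p

/-- The L^q norm over Ω: ‖f‖_q = (∫_Ω |f|^q)^(1/q). -/
def Lnorm (f : ℝ × ℝ → ℝ) (q : ℝ) : ℝ := (∫ p in Omg, |f p| ^ q) ^ (1 / q)

/-- ‖∇f‖₂ = (∫_Ω (|∂ₓf|² + |∂_yf|²))^(1/2). -/
def gradNorm (f : ℝ × ℝ → ℝ) : ℝ :=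
  (∫ p in Omg, (|px f p| ^ 2 + |py f p| ^ 2)) ^ ((1:ℝ) / 2)

/-!
The differences `w = ψ₁ - ψ₂` and `τ = θ₁ - θ₂` vanish on `∂Ω` and satisfy `Δw = -Ra ∂ₓτ` and
`Δτ = J(ψ₁,θ₁) - J(ψ₂,θ₂)`. Writing `J(ψ₁,θ₁) - J(ψ₂,θ₂) = J(w,θ₁) + J(ψ₂,τ)`, the gradient bounds
give `|Δτ| ≤ R (|∇w| + |∇τ|)`. Green's identity `∫ |∇u|² = -∫ u Δu` (the divergence theorem on the
square), Cauchy–Schwarz and the Poincaré inequality then yield, for `a = ‖∇w‖₂` and `b = ‖∇τ‖₂`,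
`a² ≤ Ra C a b` and `b² ≤ R C b (a + b)`. The smallness condition makes these incompatible unless
`a = b = 0`, and Poincaré once more gives `w = τ = 0`.
-/

open Topology

lemma isOpen_Omg : IsOpen Omg := isOpen_Ioo.prod isOpen_Ioo

lemma measurableSet_Omg : MeasurableSet Omg := isOpen_Omg.measurableSet

lemma closure_Omg : closure Omg = Icc ((0 : ℝ), (0 : ℝ)) (1, 1) := by
  rw [Icc_prod_eq]; simp [Omg, closure_prod_eq]

lemma frontier_Omg :
    frontier Omg = Icc (0 : ℝ) 1 ×ˢ {0, 1} ∪ {0, 1} ×ˢ Icc (0 : ℝ) 1 := by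
  simp [Omg, frontier_prod_eq, frontier_Ioo, closure_Ioo]

lemma closure_Omg_mem_nhds {p : ℝ × ℝ} (hp : p ∈ Omg) : closure Omg ∈ 𝓝 p :=
  mem_of_superset (isOpen_Omg.mem_nhds hp) subset_closure

lemma isCompact_closure_Omg : IsCompact (closure Omg) := by
  rw [closure_Omg]; exact isCompact_Icc

lemma uniqueDiffOn_closure_Omg : UniqueDiffOn ℝ (closure Omg) := by
  refine uniqueDiffOn_convex ((convex_Ioo 0 1).prod (convex_Ioo 0 1)).closure ?_
  exact ⟨(1 / 2, 1 / 2), interior_mono subset_closure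
    (isOpen_Omg.interior_eq.symm ▸ by norm_num [Omg])⟩

lemma Omg_ae_eq_closure : Omg =ᵐ[volume] closure Omg := by
  rw [closure_Omg, ← Icc_prod_Icc]
  exact Measure.set_prod_ae_eq Ioo_ae_eq_Icc Ioo_ae_eq_Icc

instance : IsFiniteMeasure (volume.restrict Omg) :=
  isFiniteMeasure_restrict.2 (measure_congr Omg_ae_eq_closure ▸
    isCompact_closure_Omg.measure_lt_top.ne)

section Regularity

variable {U : Set (ℝ × ℝ)} {u v : ℝ × ℝ → ℝ} {p : ℝ × ℝ}

@[fun_prop]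
lemma measurable_px (u : ℝ × ℝ → ℝ) : Measurable (px u) :=
  measurable_fderiv_apply_const ℝ u _

@[fun_prop]
lemma measurable_py (u : ℝ × ℝ → ℝ) : Measurable (py u) :=
  measurable_fderiv_apply_const ℝ u _

lemma px_eqOn_of_eqOn (hU : IsOpen U) (h : EqOn u v U) : EqOn (px u) (px v) U :=
  fun _ hp => by rw [px, px, (h.eventuallyEq_of_mem (hU.mem_nhds hp)).fderiv_eq]

lemma py_eqOn_of_eqOn (hU : IsOpen U) (h : EqOn u v U) : EqOn (py u) (py v) U :=
  fun _ hp => by rw [py, py, (h.eventuallyEq_of_mem (hU.mem_nhds hp)).fderiv_eq]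

lemma px_sub (hu : DifferentiableAt ℝ u p) (hv : DifferentiableAt ℝ v p) :
    px (fun q => u q - v q) p = px u p - px v p := by
  simp only [px, fderiv_fun_sub hu hv, sub_apply]

lemma py_sub (hu : DifferentiableAt ℝ u p) (hv : DifferentiableAt ℝ v p) :
    py (fun q => u q - v q) p = py u p - py v p := by
  simp only [py, fderiv_fun_sub hu hv, sub_apply]

lemma px_mul (hu : DifferentiableAt ℝ u p) (hv : DifferentiableAt ℝ v p) :
    px (fun q => u q * v q) p = px u p * v p + u p * px v p := by
  simp only [px, fderiv_fun_mul hu hv, add_apply, smul_apply, smul_eq_mul]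
  ring

lemma py_mul (hu : DifferentiableAt ℝ u p) (hv : DifferentiableAt ℝ v p) :
    py (fun q => u q * v q) p = py u p * v p + u p * py v p := by
  simp only [py, fderiv_fun_mul hu hv, add_apply, smul_apply, smul_eq_mul]
  ring

lemma differentiableAt_px (hu : ContDiffAt ℝ 2 u p) : DifferentiableAt ℝ (px u) p :=
  ((hu.fderiv_right (m := 1) le_rfl).clm_apply contDiffAt_const).differentiableAt one_ne_zero

lemma differentiableAt_py (hu : ContDiffAt ℝ 2 u p) : DifferentiableAt ℝ (py u) p :=
  ((hu.fderiv_right (m := 1) le_rfl).clm_apply contDiffAt_const).differentiableAt one_ne_zero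

lemma lap_sub (hu : ContDiffAt ℝ 2 u p) (hv : ContDiffAt ℝ 2 v p) :
    lap (fun q => u q - v q) p = lap u p - lap v p := by
  have hdiff : ∀ᶠ q in 𝓝 p, DifferentiableAt ℝ u q ∧ DifferentiableAt ℝ v q :=
    (hu.eventually (by simp)).and (hv.eventually (by simp)) |>.mono
      fun q hq => ⟨hq.1.differentiableAt (by simp), hq.2.differentiableAt (by simp)⟩
  have hx : px (fun q => u q - v q) =ᶠ[𝓝 p] fun q => px u q - px v q :=
    hdiff.mono fun q hq => px_sub hq.1 hq.2
  have hy : py (fun q => u q - v q) =ᶠ[𝓝 p] fun q => py u q - py v q :=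
    hdiff.mono fun q hq => py_sub hq.1 hq.2
  rw [lap, lap, lap, px, py, hx.fderiv_eq, hy.fderiv_eq,
    fderiv_fun_sub (differentiableAt_px hu) (differentiableAt_px hv),
    fderiv_fun_sub (differentiableAt_py hu) (differentiableAt_py hv)]
  simp only [sub_apply, px, py]
  ring

end Regularity

section Boundedness

variable {U : Set (ℝ × ℝ)} {u g : ℝ × ℝ → ℝ} {m n : WithTop ℕ∞}

lemma exists_contDiffOn_closure_eqOn_fderiv_apply (hU : IsOpen U)
    (hUd : UniqueDiffOn ℝ (closure U)) (hu : ContDiffOn ℝ m u (closure U)) (hnm : n + 1 ≤ m)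
    (v : ℝ × ℝ) :
    ∃ g, ContDiffOn ℝ n g (closure U) ∧ EqOn (fun p => fderiv ℝ u p v) g U :=
  ⟨fun p => fderivWithin ℝ u (closure U) p v,
    (hu.fderivWithin hUd hnm).clm_apply contDiffOn_const, fun p hp => by
      simp only [fderivWithin_of_mem_nhds
        (mem_of_superset (hU.mem_nhds hp) subset_closure)]⟩

lemma memLp_top_of_continuousOn_closure (hU : MeasurableSet U) (hUc : IsCompact (closure U))
    (hg : ContinuousOn g (closure U)) : MemLp g ⊤ (volume.restrict U) := by
  obtain ⟨M, hM⟩ := hUc.exists_bound_of_continuousOn hg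
  exact memLp_top_of_bound ((hg.mono subset_closure).aestronglyMeasurable hU) M
    ((ae_restrict_mem hU).mono fun p hp => hM p (subset_closure hp))

lemma memLp_top_fderiv_apply (hU : IsOpen U) (hUc : IsCompact (closure U))
    (hUd : UniqueDiffOn ℝ (closure U)) (hu : ContDiffOn ℝ 1 u (closure U)) (v : ℝ × ℝ) :
    MemLp (fun p => fderiv ℝ u p v) ⊤ (volume.restrict U) := by
  obtain ⟨g, hg, hug⟩ := exists_contDiffOn_closure_eqOn_fderiv_apply hU hUd hu
    (n := 0) (by norm_num) v
  exact (memLp_top_of_continuousOn_closure hU.measurableSet hUc hg.continuousOn).ae_eq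
    ((ae_restrict_mem hU.measurableSet).mono fun p hp => (hug hp).symm)

lemma memLp_top_lap (hU : IsOpen U) (hUc : IsCompact (closure U))
    (hUd : UniqueDiffOn ℝ (closure U)) (hu : ContDiffOn ℝ 2 u (closure U)) :
    MemLp (lap u) ⊤ (volume.restrict U) := by
  obtain ⟨gx, hgx, hugx⟩ := exists_contDiffOn_closure_eqOn_fderiv_apply hU hUd hu
    (n := 1) (by norm_num) (1, 0)
  obtain ⟨gy, hgy, hugy⟩ := exists_contDiffOn_closure_eqOn_fderiv_apply hU hUd hu
    (n := 1) (by norm_num) (0, 1)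
  have hx := (memLp_top_fderiv_apply hU hUc hUd hgx (1, 0)).ae_eq
    ((ae_restrict_mem hU.measurableSet).mono fun p hp => (px_eqOn_of_eqOn hU hugx hp).symm)
  have hy := (memLp_top_fderiv_apply hU hUc hUd hgy (0, 1)).ae_eq
    ((ae_restrict_mem hU.measurableSet).mono fun p hp => (py_eqOn_of_eqOn hU hugy hp).symm)
  exact hx.add hy

end Boundedness

section Lnorm

variable {f g : ℝ × ℝ → ℝ}

lemma Lnorm_two_eq_sqrt (f : ℝ × ℝ → ℝ) : Lnorm f 2 = √(∫ p in Omg, f p ^ 2) := by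
  simp [Lnorm, Real.sqrt_eq_rpow]

lemma Lnorm_two_nonneg (f : ℝ × ℝ → ℝ) : 0 ≤ Lnorm f 2 := by
  rw [Lnorm_two_eq_sqrt]; positivity

lemma gradNorm_nonneg (u : ℝ × ℝ → ℝ) : 0 ≤ gradNorm u := by
  rw [gradNorm]; positivity

lemma gradNorm_eq_sqrt (u : ℝ × ℝ → ℝ) :
    gradNorm u = √(∫ p in Omg, (px u p ^ 2 + py u p ^ 2)) := by
  simp [gradNorm, Real.sqrt_eq_rpow]

lemma Lnorm_two_eq_toReal_eLpNorm (hf : MemLp f 2 (volume.restrict Omg)) :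
    Lnorm f 2 = (eLpNorm f 2 (volume.restrict Omg)).toReal := by
  rw [hf.eLpNorm_eq_integral_rpow_norm two_ne_zero ENNReal.ofNat_ne_top,
    ENNReal.toReal_ofReal (by positivity)]
  simp [Lnorm]

lemma Lnorm_two_add_le (hf : MemLp f 2 (volume.restrict Omg))
    (hg : MemLp g 2 (volume.restrict Omg)) : Lnorm (f + g) 2 ≤ Lnorm f 2 + Lnorm g 2 := by
  rw [Lnorm_two_eq_toReal_eLpNorm hf, Lnorm_two_eq_toReal_eLpNorm hg,
    Lnorm_two_eq_toReal_eLpNorm (hf.add hg), ← ENNReal.toReal_add hf.eLpNorm_ne_top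
      hg.eLpNorm_ne_top]
  exact ENNReal.toReal_mono (ENNReal.add_ne_top.2 ⟨hf.eLpNorm_ne_top, hg.eLpNorm_ne_top⟩)
    (eLpNorm_add_le hf.1 hg.1 one_le_two)

lemma integral_abs_mul_abs_le (hf : MemLp f 2 (volume.restrict Omg))
    (hg : MemLp g 2 (volume.restrict Omg)) :
    ∫ p in Omg, |f p| * |g p| ≤ Lnorm f 2 * Lnorm g 2 := by
  have h := integral_mul_le_Lp_mul_Lq_of_nonneg Real.HolderConjugate.two_two
    (ae_of_all _ fun p => abs_nonneg (f p)) (ae_of_all _ fun p => abs_nonneg (g p))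
    (by simpa using hf.norm) (by simpa using hg.norm)
  simpa [Lnorm] using h

lemma memLp_two_of_continuousOn_closure (hf : ContinuousOn f (closure Omg)) :
    MemLp f 2 (volume.restrict Omg) :=
  (memLp_top_of_continuousOn_closure measurableSet_Omg isCompact_closure_Omg hf).mono_exponent
    le_top

lemma eqOn_zero_of_gradNorm_eq_zero {C : ℝ} (hf : ContinuousOn f (closure Omg))
    (hP : Lnorm f 2 ≤ C * gradNorm f) (h : gradNorm f = 0) : EqOn f 0 Omg := by
  have hL : Lnorm f 2 = 0 := le_antisymm (by simpa [h] using hP) (Lnorm_two_nonneg f)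
  rw [Lnorm_two_eq_sqrt, Real.sqrt_eq_zero (integral_nonneg fun p => sq_nonneg _),
    integral_eq_zero_iff_of_nonneg (fun p => sq_nonneg _)
      (memLp_two_of_continuousOn_closure hf).integrable_sq] at hL
  exact Measure.eqOn_open_of_ae_eq (hL.mono fun p hp => pow_eq_zero_iff two_ne_zero |>.1 hp)
    isOpen_Omg (hf.mono subset_closure) continuousOn_const

end Lnorm

def gradAbs (u : ℝ × ℝ → ℝ) (p : ℝ × ℝ) : ℝ := √(px u p ^ 2 + py u p ^ 2)

lemma gradAbs_nonneg (u : ℝ × ℝ → ℝ) (p : ℝ × ℝ) : 0 ≤ gradAbs u p := Real.sqrt_nonneg _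

lemma Lnorm_gradAbs (u : ℝ × ℝ → ℝ) : Lnorm (gradAbs u) 2 = gradNorm u := by
  simp only [Lnorm_two_eq_sqrt, gradNorm_eq_sqrt, gradAbs]
  congr 1
  exact integral_congr_ae (ae_of_all _ fun p => Real.sq_sqrt (by positivity))

lemma abs_px_le_gradAbs (u : ℝ × ℝ → ℝ) (p : ℝ × ℝ) : |px u p| ≤ gradAbs u p :=
  Real.abs_le_sqrt (le_add_of_nonneg_right (sq_nonneg _))

lemma gradAbs_le_of_abs_le {u : ℝ × ℝ → ℝ} {p : ℝ × ℝ} {R : ℝ} (hx : |px u p| ≤ R / √2)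
    (hy : |py u p| ≤ R / √2) : gradAbs u p ≤ R := by
  have hR : 0 ≤ R := by
    have := (abs_nonneg _).trans hx
    rwa [le_div_iff₀ (by positivity), zero_mul] at this
  have hsq : (R / √2) ^ 2 = R ^ 2 / 2 := by rw [div_pow, Real.sq_sqrt zero_le_two]
  refine Real.sqrt_le_iff.2 ⟨hR, ?_⟩
  nlinarith [sq_le_sq' (abs_le.1 hx).1 (abs_le.1 hx).2, sq_le_sq' (abs_le.1 hy).1 (abs_le.1 hy).2]

lemma memLp_gradAbs {u : ℝ × ℝ → ℝ} (hu : ContDiffOn ℝ 1 u (closure Omg)) :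
    MemLp (gradAbs u) 2 (volume.restrict Omg) := by
  have hsum : MemLp (fun p => |px u p| + |py u p|) ⊤ (volume.restrict Omg) :=
    (memLp_top_fderiv_apply isOpen_Omg isCompact_closure_Omg uniqueDiffOn_closure_Omg hu
      (1, 0)).abs.add
      (memLp_top_fderiv_apply isOpen_Omg isCompact_closure_Omg uniqueDiffOn_closure_Omg hu
      (0, 1)).abs
  refine (hsum.mono_exponent le_top).of_le (by unfold gradAbs; fun_prop) (ae_of_all _ fun p => ?_)
  rw [gradAbs, Real.norm_of_nonneg (Real.sqrt_nonneg _), Real.norm_of_nonneg (by positivity)]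
  refine Real.sqrt_le_iff.2 ⟨by positivity, ?_⟩
  nlinarith [sq_abs (px u p), sq_abs (py u p), abs_nonneg (px u p), abs_nonneg (py u p)]

lemma Lnorm_gradAbs_add_le {u v : ℝ × ℝ → ℝ} (hu : ContDiffOn ℝ 1 u (closure Omg))
    (hv : ContDiffOn ℝ 1 v (closure Omg)) :
    Lnorm (gradAbs u + gradAbs v) 2 ≤ gradNorm u + gradNorm v := by
  simpa only [Lnorm_gradAbs] using Lnorm_two_add_le (memLp_gradAbs hu) (memLp_gradAbs hv)

lemma integral_px_add_py_eq_zero {F G : ℝ × ℝ → ℝ} (hF : ContinuousOn F (closure Omg))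
    (hG : ContinuousOn G (closure Omg)) (hFd : DifferentiableOn ℝ F Omg)
    (hGd : DifferentiableOn ℝ G Omg) (hi : IntegrableOn (fun p => px F p + py G p) Omg)
    (hF0 : ∀ p ∈ frontier Omg, F p = 0) (hG0 : ∀ p ∈ frontier Omg, G p = 0) :
    ∫ p in Omg, (px F p + py G p) = 0 := by
  rw [setIntegral_congr_set Omg_ae_eq_closure, closure_Omg]
  rw [closure_Omg] at hF hG
  have hdiv := integral_divergence_prod_Icc_of_hasFDerivAt_off_countable_of_le F G
    (fderiv ℝ F) (fderiv ℝ G) ((0 : ℝ), (0 : ℝ)) (1, 1) (by norm_num [Prod.le_def]) ∅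
    countable_empty hF hG
    (fun p hp => (hFd.differentiableAt (isOpen_Omg.mem_nhds hp.1)).hasFDerivAt)
    (fun p hp => (hGd.differentiableAt (isOpen_Omg.mem_nhds hp.1)).hasFDerivAt)
    (closure_Omg ▸ hi.congr_set_ae Omg_ae_eq_closure.symm)
  have hedge : ∀ t ∈ uIcc (0 : ℝ) 1, ∀ e ∈ ({0, 1} : Set ℝ),
      (t, e) ∈ frontier Omg ∧ (e, t) ∈ frontier Omg := by
    intro t ht e he
    rw [uIcc_of_le zero_le_one] at ht
    simp [frontier_Omg, ht, he]
  have hzero : ∀ (H : ℝ × ℝ → ℝ) (c : ℝ → ℝ × ℝ), (∀ p ∈ frontier Omg, H p = 0) →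
      (∀ t ∈ uIcc (0 : ℝ) 1, c t ∈ frontier Omg) → ∫ t in (0 : ℝ)..1, H (c t) = 0 :=
    fun H c hH hc => by
      simpa using intervalIntegral.integral_congr (g := fun _ => (0 : ℝ))
        fun t ht => hH _ (hc t ht)
  refine hdiv.trans ?_
  rw [hzero G (fun t => (t, 1)) hG0 fun t ht => (hedge t ht 1 (by simp)).1,
    hzero G (fun t => (t, 0)) hG0 fun t ht => (hedge t ht 0 (by simp)).1,
    hzero F (fun t => (1, t)) hF0 fun t ht => (hedge t ht 1 (by simp)).2,
    hzero F (fun t => (0, t)) hF0 fun t ht => (hedge t ht 0 (by simp)).2]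
  simp

lemma gradNorm_sq_eq_neg_integral_mul_lap {u : ℝ × ℝ → ℝ} (hu : ContDiffOn ℝ 2 u (closure Omg))
    (hu0 : ∀ p ∈ frontier Omg, u p = 0) : gradNorm u ^ 2 = -∫ p in Omg, u p * lap u p := by
  obtain ⟨gx, hgx, hugx : EqOn (px u) gx Omg⟩ := exists_contDiffOn_closure_eqOn_fderiv_apply
    isOpen_Omg uniqueDiffOn_closure_Omg hu (n := 1) (by norm_num) (1, 0)
  obtain ⟨gy, hgy, hugy : EqOn (py u) gy Omg⟩ := exists_contDiffOn_closure_eqOn_fderiv_apply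
    isOpen_Omg uniqueDiffOn_closure_Omg hu (n := 1) (by norm_num) (0, 1)
  have hud : DifferentiableOn ℝ u Omg := (hu.differentiableOn two_ne_zero).mono subset_closure
  have hgxd : DifferentiableOn ℝ gx Omg := (hgx.differentiableOn one_ne_zero).mono subset_closure
  have hgyd : DifferentiableOn ℝ gy Omg := (hgy.differentiableOn one_ne_zero).mono subset_closure
  have hdiff {g : ℝ × ℝ → ℝ} {p : ℝ × ℝ} (hg : DifferentiableOn ℝ g Omg) (hp : p ∈ Omg) :
      DifferentiableAt ℝ g p := hg.differentiableAt (isOpen_Omg.mem_nhds hp)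
  -- `u ∇u` is not continuous up to the boundary; `u (gx, gy)` is, and has the same divergence.
  have hdensity : ∀ p ∈ Omg, px (fun q => u q * gx q) p + py (fun q => u q * gy q) p =
      (px u p ^ 2 + py u p ^ 2) + u p * lap u p := by
    intro p hp
    rw [px_mul (hdiff hud hp) (hdiff hgxd hp), py_mul (hdiff hud hp) (hdiff hgyd hp), lap,
      px_eqOn_of_eqOn isOpen_Omg hugx hp, py_eqOn_of_eqOn isOpen_Omg hugy hp,
      ← hugx hp, ← hugy hp]
    simp only [px, py]
    ring
  have hpx : MemLp (px u) ⊤ (volume.restrict Omg) := memLp_top_fderiv_apply isOpen_Omg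
    isCompact_closure_Omg uniqueDiffOn_closure_Omg (hu.of_le one_le_two) (1, 0)
  have hpy : MemLp (py u) ⊤ (volume.restrict Omg) := memLp_top_fderiv_apply isOpen_Omg
    isCompact_closure_Omg uniqueDiffOn_closure_Omg (hu.of_le one_le_two) (0, 1)
  have hint₁ : IntegrableOn (fun p => px u p ^ 2 + py u p ^ 2) Omg :=
    (hpx.mono_exponent le_top).integrable_sq.add (hpy.mono_exponent le_top).integrable_sq
  have hint₂ : IntegrableOn (fun p => u p * lap u p) Omg :=
    ((memLp_top_of_continuousOn_closure measurableSet_Omg isCompact_closure_Omg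
      hu.continuousOn).integrable le_top).mul_of_top_left
      (memLp_top_lap isOpen_Omg isCompact_closure_Omg uniqueDiffOn_closure_Omg hu)
  have hGreen := integral_px_add_py_eq_zero (F := fun q => u q * gx q)
    (G := fun q => u q * gy q) (hu.continuousOn.mul hgx.continuousOn)
    (hu.continuousOn.mul hgy.continuousOn) (hud.mul hgxd) (hud.mul hgyd)
    ((hint₁.add hint₂).congr_fun (fun p hp => (hdensity p hp).symm) measurableSet_Omg)
    (fun p hp => by simp [hu0 p hp]) (fun p hp => by simp [hu0 p hp])
  rw [setIntegral_congr_fun measurableSet_Omg hdensity, integral_add hint₁ hint₂] at hGreen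
  rw [gradNorm_eq_sqrt, Real.sq_sqrt (integral_nonneg fun p => by positivity)]
  linarith

lemma gradNorm_sq_le_of_abs_lap_le {u g : ℝ × ℝ → ℝ} {K C M : ℝ}
    (hu : ContDiffOn ℝ 2 u (closure Omg)) (hu0 : ∀ p ∈ frontier Omg, u p = 0)
    (hP : Lnorm u 2 ≤ C * gradNorm u) (hK : 0 ≤ K) (hg : MemLp g 2 (volume.restrict Omg))
    (hlap : ∀ p ∈ Omg, |lap u p| ≤ K * g p) (hgM : Lnorm g 2 ≤ M) :
    gradNorm u ^ 2 ≤ K * C * (gradNorm u * M) := by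
  have hu2 := memLp_two_of_continuousOn_closure hu.continuousOn
  have hint : Integrable (fun p => K * (|u p| * |g p|)) (volume.restrict Omg) := by
    simpa using (hu2.norm.integrable_mul hg.norm).const_mul K
  calc gradNorm u ^ 2 = -∫ p in Omg, u p * lap u p := gradNorm_sq_eq_neg_integral_mul_lap hu hu0
    _ ≤ ∫ p in Omg, |u p| * |lap u p| := by
      simp_rw [← abs_mul]
      exact (neg_le_abs _).trans abs_integral_le_integral_abs
    _ ≤ ∫ p in Omg, K * (|u p| * |g p|) := by
      refine integral_mono_of_nonneg (ae_of_all _ fun p => by positivity) hint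
        ((ae_restrict_mem measurableSet_Omg).mono fun p hp => ?_)
      calc |u p| * |lap u p| ≤ |u p| * (K * |g p|) :=
            mul_le_mul_of_nonneg_left ((hlap p hp).trans (by gcongr; exact le_abs_self _))
              (abs_nonneg _)
        _ = K * (|u p| * |g p|) := by ring
    _ = K * ∫ p in Omg, |u p| * |g p| := integral_const_mul K _
    _ ≤ K * (C * gradNorm u * M) := by
      refine mul_le_mul_of_nonneg_left ((integral_abs_mul_abs_le hu2 hg).trans ?_) hK
      exact mul_le_mul hP hgM (Lnorm_two_nonneg g) ((Lnorm_two_nonneg u).trans hP)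
    _ = K * C * (gradNorm u * M) := by ring

lemma abs_mul_sub_mul_le (a b c d : ℝ) :
    |a * d - b * c| ≤ √(a ^ 2 + b ^ 2) * √(c ^ 2 + d ^ 2) := by
  rw [← Real.sqrt_mul (by positivity)]
  exact Real.abs_le_sqrt (by nlinarith [sq_nonneg (a * c + b * d)])

lemma abs_jac_sub_le {ψ₁ θ₁ ψ₂ θ₂ : ℝ × ℝ → ℝ} {p : ℝ × ℝ} {R : ℝ}
    (hψ₁ : DifferentiableAt ℝ ψ₁ p) (hθ₁ : DifferentiableAt ℝ θ₁ p)
    (hψ₂ : DifferentiableAt ℝ ψ₂ p) (hθ₂ : DifferentiableAt ℝ θ₂ p)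
    (hθ₁R : gradAbs θ₁ p ≤ R) (hψ₂R : gradAbs ψ₂ p ≤ R) :
    |Jac ψ₁ θ₁ p - Jac ψ₂ θ₂ p| ≤
      R * (gradAbs (fun q => ψ₁ q - ψ₂ q) p + gradAbs (fun q => θ₁ q - θ₂ q) p) := by
  have hsplit : Jac ψ₁ θ₁ p - Jac ψ₂ θ₂ p =
      ((px ψ₁ p - px ψ₂ p) * py θ₁ p - (py ψ₁ p - py ψ₂ p) * px θ₁ p) +
      (px ψ₂ p * (py θ₁ p - py θ₂ p) - py ψ₂ p * (px θ₁ p - px θ₂ p)) := by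
    unfold Jac; ring
  have h₁ := abs_mul_sub_mul_le (px ψ₁ p - px ψ₂ p) (py ψ₁ p - py ψ₂ p) (px θ₁ p) (py θ₁ p)
  have h₂ := abs_mul_sub_mul_le (px ψ₂ p) (py ψ₂ p) (px θ₁ p - px θ₂ p) (py θ₁ p - py θ₂ p)
  rw [gradAbs, gradAbs, px_sub hψ₁ hψ₂, py_sub hψ₁ hψ₂, px_sub hθ₁ hθ₂, py_sub hθ₁ hθ₂, hsplit]
  unfold gradAbs at hθ₁R hψ₂R
  refine (abs_add_le _ _).trans ((add_le_add h₁ h₂).trans ?_)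
  nlinarith [mul_le_mul_of_nonneg_left hθ₁R (Real.sqrt_nonneg
      ((px ψ₁ p - px ψ₂ p) ^ 2 + (py ψ₁ p - py ψ₂ p) ^ 2)),
    mul_le_mul_of_nonneg_right hψ₂R (Real.sqrt_nonneg
      ((px θ₁ p - px θ₂ p) ^ 2 + (py θ₁ p - py θ₂ p) ^ 2))]

lemma abs_lap_sub_le_of_momentum_eq {ψ₁ θ₁ ψ₂ θ₂ : ℝ × ℝ → ℝ} {p : ℝ × ℝ} {Ra c : ℝ}
    (hRa : 0 ≤ Ra) (hψ₁ : ContDiffAt ℝ 2 ψ₁ p) (hψ₂ : ContDiffAt ℝ 2 ψ₂ p)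
    (hθ₁ : DifferentiableAt ℝ θ₁ p) (hθ₂ : DifferentiableAt ℝ θ₂ p)
    (h₁ : -(lap ψ₁ p) - Ra * px θ₁ p = c) (h₂ : -(lap ψ₂ p) - Ra * px θ₂ p = c) :
    |lap (fun q => ψ₁ q - ψ₂ q) p| ≤ Ra * gradAbs (fun q => θ₁ q - θ₂ q) p := by
  have hlap : lap (fun q => ψ₁ q - ψ₂ q) p = -(Ra * px (fun q => θ₁ q - θ₂ q) p) := by
    rw [lap_sub hψ₁ hψ₂, px_sub hθ₁ hθ₂]
    linarith
  rw [hlap, abs_neg, abs_mul, abs_of_nonneg hRa]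
  exact mul_le_mul_of_nonneg_left (abs_px_le_gradAbs _ p) hRa

lemma abs_lap_sub_le_of_heat_eq {ψ₁ θ₁ ψ₂ θ₂ : ℝ × ℝ → ℝ} {p : ℝ × ℝ} {R c : ℝ}
    (hψ₁ : DifferentiableAt ℝ ψ₁ p) (hψ₂ : DifferentiableAt ℝ ψ₂ p)
    (hθ₁ : ContDiffAt ℝ 2 θ₁ p) (hθ₂ : ContDiffAt ℝ 2 θ₂ p)
    (hθ₁R : gradAbs θ₁ p ≤ R) (hψ₂R : gradAbs ψ₂ p ≤ R)
    (h₁ : Jac ψ₁ θ₁ p = lap θ₁ p + c) (h₂ : Jac ψ₂ θ₂ p = lap θ₂ p + c) :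
    |lap (fun q => θ₁ q - θ₂ q) p| ≤
      R * (gradAbs (fun q => ψ₁ q - ψ₂ q) p + gradAbs (fun q => θ₁ q - θ₂ q) p) := by
  have hlap : lap (fun q => θ₁ q - θ₂ q) p = Jac ψ₁ θ₁ p - Jac ψ₂ θ₂ p := by
    rw [lap_sub hθ₁ hθ₂]
    linarith
  rw [hlap]
  exact abs_jac_sub_le hψ₁ (hθ₁.differentiableAt two_ne_zero) hψ₂
    (hθ₂.differentiableAt two_ne_zero) hθ₁R hψ₂R

lemma eq_zero_of_sq_le {a b α β : ℝ} (ha : 0 ≤ a) (hb : 0 ≤ b) (hα : 0 ≤ α) (hβ : 0 ≤ β)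
    (hαβ : α / 2 + 3 * β / 2 < 1) (h₁ : a ^ 2 ≤ α * (a * b)) (h₂ : b ^ 2 ≤ β * (b * (a + b))) :
    a = 0 ∧ b = 0 := by
  have hab : 2 * (a * b) ≤ a ^ 2 + b ^ 2 := by nlinarith [sq_nonneg (a - b)]
  have hsum : a ^ 2 + b ^ 2 ≤ (α / 2 + 3 * β / 2) * (a ^ 2 + b ^ 2) := by
    nlinarith [mul_le_mul_of_nonneg_left hab hα, mul_le_mul_of_nonneg_left hab hβ,
      mul_nonneg hβ (sq_nonneg a)]
  have hzero : a ^ 2 + b ^ 2 ≤ 0 := by nlinarith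
  constructor <;> nlinarith [sq_nonneg a, sq_nonneg b]

theorem stmt_5_general (Ra R C : ℝ) (hRa : 0 < Ra) (hR : 0 < R) (hC0 : 0 < C) (hC1 : C ≤ 1)
    (hPoincare : ∀ v : ℝ × ℝ → ℝ, ContDiffOn ℝ 1 v (closure Omg) →
      (∀ p ∈ frontier Omg, v p = 0) → Lnorm v 2 ≤ C * gradNorm v)
    (f₁ f₂ : ℝ × ℝ → ℝ)
    (ψ₁ θ₁ ψ₂ θ₂ : ℝ × ℝ → ℝ)
    (hψ₁ : ContDiffOn ℝ 2 ψ₁ (closure Omg)) (hθ₁ : ContDiffOn ℝ 2 θ₁ (closure Omg))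
    (hψ₂ : ContDiffOn ℝ 2 ψ₂ (closure Omg)) (hθ₂ : ContDiffOn ℝ 2 θ₂ (closure Omg))
    (hψ₁b : ∀ p ∈ frontier Omg, ψ₁ p = 0) (hθ₁b : ∀ p ∈ frontier Omg, θ₁ p = 0)
    (hψ₂b : ∀ p ∈ frontier Omg, ψ₂ p = 0) (hθ₂b : ∀ p ∈ frontier Omg, θ₂ p = 0)
    (heq1₁ : ∀ p ∈ Omg, -(lap ψ₁ p) - Ra * px θ₁ p = f₁ p)
    (heq2₁ : ∀ p ∈ Omg, Jac ψ₁ θ₁ p = lap θ₁ p + f₂ p)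
    (heq1₂ : ∀ p ∈ Omg, -(lap ψ₂ p) - Ra * px θ₂ p = f₁ p)
    (heq2₂ : ∀ p ∈ Omg, Jac ψ₂ θ₂ p = lap θ₂ p + f₂ p)
    (hb₁ : ∀ p ∈ Omg, |px ψ₁ p| ≤ R / Real.sqrt 2 ∧ |py ψ₁ p| ≤ R / Real.sqrt 2 ∧
      |px θ₁ p| ≤ R / Real.sqrt 2 ∧ |py θ₁ p| ≤ R / Real.sqrt 2)
    (hb₂ : ∀ p ∈ Omg, |px ψ₂ p| ≤ R / Real.sqrt 2 ∧ |py ψ₂ p| ≤ R / Real.sqrt 2 ∧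
      |px θ₂ p| ≤ R / Real.sqrt 2 ∧ |py θ₂ p| ≤ R / Real.sqrt 2)
    (hcond2 : 0 < 1 - Ra / 2 - 2 * Real.sqrt 2 * R * C) :
    ∀ p ∈ Omg, ψ₁ p = ψ₂ p ∧ θ₁ p = θ₂ p := by
  set w := fun q => ψ₁ q - ψ₂ q
  set τ := fun q => θ₁ q - θ₂ q
  have hw : ContDiffOn ℝ 2 w (closure Omg) := hψ₁.sub hψ₂
  have hτ : ContDiffOn ℝ 2 τ (closure Omg) := hθ₁.sub hθ₂
  have hw1 := hw.of_le one_le_two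
  have hτ1 := hτ.of_le one_le_two
  have hw0 : ∀ p ∈ frontier Omg, w p = 0 := fun p hp => by simp [w, hψ₁b p hp, hψ₂b p hp]
  have hτ0 : ∀ p ∈ frontier Omg, τ p = 0 := fun p hp => by simp [τ, hθ₁b p hp, hθ₂b p hp]
  have hC2 {u : ℝ × ℝ → ℝ} (hu : ContDiffOn ℝ 2 u (closure Omg)) {p} (hp : p ∈ Omg) :
      ContDiffAt ℝ 2 u p := hu.contDiffAt (closure_Omg_mem_nhds hp)
  have hD {u : ℝ × ℝ → ℝ} (hu : ContDiffOn ℝ 2 u (closure Omg)) {p} (hp : p ∈ Omg) :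
      DifferentiableAt ℝ u p := (hC2 hu hp).differentiableAt two_ne_zero
  have hlapw : ∀ p ∈ Omg, |lap w p| ≤ Ra * gradAbs τ p := fun p hp =>
    abs_lap_sub_le_of_momentum_eq hRa.le (hC2 hψ₁ hp) (hC2 hψ₂ hp) (hD hθ₁ hp) (hD hθ₂ hp)
      (heq1₁ p hp) (heq1₂ p hp)
  have hlapτ : ∀ p ∈ Omg, |lap τ p| ≤ R * (gradAbs w + gradAbs τ) p := fun p hp =>
    abs_lap_sub_le_of_heat_eq (hD hψ₁ hp) (hD hψ₂ hp) (hC2 hθ₁ hp) (hC2 hθ₂ hp)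
      (gradAbs_le_of_abs_le (hb₁ p hp).2.2.1 (hb₁ p hp).2.2.2)
      (gradAbs_le_of_abs_le (hb₂ p hp).1 (hb₂ p hp).2.1) (heq2₁ p hp) (heq2₂ p hp)
  have h₁ := gradNorm_sq_le_of_abs_lap_le hw hw0 (hPoincare w hw1 hw0) hRa.le
    (memLp_gradAbs hτ1) hlapw (Lnorm_gradAbs τ).le
  have h₂ := gradNorm_sq_le_of_abs_lap_le hτ hτ0 (hPoincare τ hτ1 hτ0) hR.le
    ((memLp_gradAbs hw1).add (memLp_gradAbs hτ1)) hlapτ (Lnorm_gradAbs_add_le hw1 hτ1)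
  have hsmall : Ra * C / 2 + 3 * (R * C) / 2 < 1 := by
    nlinarith [Real.one_lt_sqrt_two, mul_pos hR hC0, mul_le_of_le_one_right hRa.le hC1]
  obtain ⟨hw', hτ'⟩ := eq_zero_of_sq_le (gradNorm_nonneg w) (gradNorm_nonneg τ)
    (mul_pos hRa hC0).le (mul_pos hR hC0).le hsmall h₁ h₂
  intro p hp
  exact ⟨sub_eq_zero.1 (eqOn_zero_of_gradNorm_eq_zero hw.continuousOn
      (hPoincare w hw1 hw0) hw' hp),
    sub_eq_zero.1 (eqOn_zero_of_gradNorm_eq_zero hτ.continuousOn (hPoincare τ hτ1 hτ0) hτ' hp)⟩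

/-- Uniqueness (Lemma 3) for classical solutions of the coupled system. -/
theorem stmt_5 (Ra R C : ℝ) (hRa : 0 < Ra) (hR : 0 < R) (hC0 : 0 < C) (hC1 : C ≤ 1)
    (hPoincare : ∀ v : ℝ × ℝ → ℝ, ContDiffOn ℝ 1 v (closure Omg) →
      (∀ p ∈ frontier Omg, v p = 0) → Lnorm v 2 ≤ C * gradNorm v)
    (f₁ f₂ : ℝ × ℝ → ℝ) (hf₁ : ContinuousOn f₁ (closure Omg))
    (hf₂ : ContinuousOn f₂ (closure Omg))
    (ψ₁ θ₁ ψ₂ θ₂ : ℝ × ℝ → ℝ)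
    (hψ₁ : ContDiffOn ℝ 2 ψ₁ (closure Omg)) (hθ₁ : ContDiffOn ℝ 2 θ₁ (closure Omg))
    (hψ₂ : ContDiffOn ℝ 2 ψ₂ (closure Omg)) (hθ₂ : ContDiffOn ℝ 2 θ₂ (closure Omg))
    (hψ₁b : ∀ p ∈ frontier Omg, ψ₁ p = 0) (hθ₁b : ∀ p ∈ frontier Omg, θ₁ p = 0)
    (hψ₂b : ∀ p ∈ frontier Omg, ψ₂ p = 0) (hθ₂b : ∀ p ∈ frontier Omg, θ₂ p = 0)
    (heq1₁ : ∀ p ∈ Omg, -(lap ψ₁ p) - Ra * px θ₁ p = f₁ p)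
    (heq2₁ : ∀ p ∈ Omg, Jac ψ₁ θ₁ p = lap θ₁ p + f₂ p)
    (heq1₂ : ∀ p ∈ Omg, -(lap ψ₂ p) - Ra * px θ₂ p = f₁ p)
    (heq2₂ : ∀ p ∈ Omg, Jac ψ₂ θ₂ p = lap θ₂ p + f₂ p)
    (hb₁ : ∀ p ∈ Omg, |px ψ₁ p| ≤ R / Real.sqrt 2 ∧ |py ψ₁ p| ≤ R / Real.sqrt 2 ∧
      |px θ₁ p| ≤ R / Real.sqrt 2 ∧ |py θ₁ p| ≤ R / Real.sqrt 2)
    (hb₂ : ∀ p ∈ Omg, |px ψ₂ p| ≤ R / Real.sqrt 2 ∧ |py ψ₂ p| ≤ R / Real.sqrt 2 ∧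
      |px θ₂ p| ≤ R / Real.sqrt 2 ∧ |py θ₂ p| ≤ R / Real.sqrt 2)
    (hcond1 : 0 < 1 - C * R / Real.sqrt 2 - C * Ra / 2)
    (hcond2 : 0 < 1 - Ra / 2 - 2 * Real.sqrt 2 * R * C) :
    ∀ p ∈ Omg, ψ₁ p = ψ₂ p ∧ θ₁ p = θ₂ p :=
  stmt_5_general Ra R C hRa hR hC0 hC1 hPoincare f₁ f₂ ψ₁ θ₁ ψ₂ θ₂ hψ₁ hθ₁ hψ₂ hθ₂ hψ₁b hθ₁b hψ₂b
    hθ₂b heq1₁ heq2₁ heq1₂ heq2₂ hb₁ hb₂ hcond2
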